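/- Let φ₀ : F → N be the unique monoid homomorphism with φ₀(π_i) = π_i′, where (N, Σ′, π₁′, π₂′) is a CQP monoid, and let φ : T → N be the unique magma homomorphism extending φ₀ (defined by φ(Σ(A₁,A₂)) = Σ′(φ(A₁),φ(A₂))). Then φ(AB) = φ(A)φ(B) for all A, B ∈ T, where AB is the tree product. -/
import Mathlib


/-- The free magma `T` on the free monoid `F` on π₁, π₂: finite nonempty ordered
binary trees with leaves colored by elements of `F`. -/
inductive Tm : Type
  | leaf : FreeMonoid (Fin 2) → Tm
  | node : Tm → Tm → Tm

/-- The action of the generator πᵢ on `T`: it picks out the `i`-th subtree of a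
node, and acts by left multiplication on (the color of) a single leaf. -/
def pact (i : Fin 2) : Tm → Tm
  | .leaf w => .leaf (FreeMonoid.of i * w)
  | .node A B => if i = 0 then A else B

/-- The left action of a word `w ∈ F` on `T`, applying the symbols of `w` one at
a time from right to left. -/
def wact (w : FreeMonoid (Fin 2)) (A : Tm) : Tm :=
  (FreeMonoid.toList w).foldr pact A

/-- The product on `T`: `A * B` replaces each leaf of `A` of color `w` by `w • B`. -/
def tmul : Tm → Tm → Tm
  | .leaf w, B => wact w B
  | .node A₁ A₂, B => .node (tmul A₁ B) (tmul A₂ B)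

/-- The identity of `T`: a single leaf colored by the empty word. -/
def tone : Tm := .leaf 1

/-- The list of leaves of a tree `A ∈ T`, in order, recorded as pairs
`(path, color)`: the path from the root to the leaf is described by the word
`path` read from right to left, and `color` is the color of the leaf. -/
def tleaves : Tm → List (FreeMonoid (Fin 2) × FreeMonoid (Fin 2))
  | .leaf w => [(1, w)]
  | .node A B =>
      ((tleaves A).map fun pc => (pc.1 * FreeMonoid.of 0, pc.2)) ++
        ((tleaves B).map fun pc => (pc.1 * FreeMonoid.of 1, pc.2))

/-- A categorical quasiproduct structure on a monoid. -/
def IsCQP {M : Type*} [Monoid M] (Sg : M → M → M) (π₁ π₂ : M) : Prop :=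
  (∀ a b, π₁ * Sg a b = a) ∧ (∀ a b, π₂ * Sg a b = b) ∧
    (∀ a b c, Sg (a * c) (b * c) = Sg a b * c)

/-- The unique magma homomorphism `T → N` extending the monoid homomorphism
`F → N` sending `πᵢ` to `p i`. -/
def tlift {N : Type*} [Monoid N] (Sg : N → N → N) (p : Fin 2 → N) : Tm → N
  | .leaf w => FreeMonoid.lift p w
  | .node A B => Sg (tlift Sg p A) (tlift Sg p B)

theorem tlift_pact {N : Type*} [Monoid N] (Sg : N → N → N) (p : Fin 2 → N)
    (h : IsCQP Sg (p 0) (p 1)) (i : Fin 2) (A : Tm) :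
    tlift Sg p (pact i A) = p i * tlift Sg p A := by
  cases A with
  | leaf w => simp [pact, tlift]
  | node A B =>
    fin_cases i
    · simpa [pact, tlift] using (h.1 (tlift Sg p A) (tlift Sg p B)).symm
    · simpa [pact, tlift] using (h.2.1 (tlift Sg p A) (tlift Sg p B)).symm

theorem tlift_foldr {N : Type*} [Monoid N] (Sg : N → N → N) (p : Fin 2 → N)
    (h : IsCQP Sg (p 0) (p 1)) (l : List (Fin 2)) (A : Tm) :
    tlift Sg p (l.foldr pact A) = (l.map p).prod * tlift Sg p A := by
  induction l with
  | nil => simp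
  | cons i l ih => simp [tlift_pact Sg p h, ih, mul_assoc]

theorem tlift_wact {N : Type*} [Monoid N] (Sg : N → N → N) (p : Fin 2 → N)
    (h : IsCQP Sg (p 0) (p 1)) (w : FreeMonoid (Fin 2)) (A : Tm) :
    tlift Sg p (wact w A) = FreeMonoid.lift p w * tlift Sg p A := by
  rw [wact, tlift_foldr Sg p h, FreeMonoid.lift_apply]

/-- If `(N, Σ', π₁', π₂')` is a CQP monoid, then the magma homomorphism
`φ : T → N` extending `πᵢ ↦ πᵢ'` is multiplicative for the tree product. -/
theorem tlift_tmul {N : Type*} [Monoid N] (Sg : N → N → N) (p : Fin 2 → N)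
    (h : IsCQP Sg (p 0) (p 1)) (A B : Tm) :
    tlift Sg p (tmul A B) = tlift Sg p A * tlift Sg p B := by
  induction A with
  | leaf w => exact tlift_wact Sg p h w B
  | node A₁ A₂ ih₁ ih₂ =>
    simp only [tmul, tlift, ih₁, ih₂]
    exact h.2.2 _ _ _
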